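/- With (Pₙ) a uniform approximate projection on a Banach space Y and A ∈ L(Y,P), the quotient norm of A modulo P-compact operators equals the quotient norm of the adjoint A* modulo P*-compact operators on Y*: ‖A + K(Y,P)‖ = ‖A* + K(Y*,P*)‖. -/

import Mathlib

/-- `K` is `P`-compact: `‖(I - Pₙ)K‖ + ‖K(I - Pₙ)‖ → 0`. -/
def IsPCompact' {Y : Type*} [NormedAddCommGroup Y] [NormedSpace ℝ Y]
    (P : ℕ → Y →L[ℝ] Y) (K : Y →L[ℝ] Y) : Prop :=
  Filter.Tendsto (fun n => ‖K - (P n).comp K‖ + ‖K - K.comp (P n)‖)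
    Filter.atTop (nhds 0)

/-- The Banach space adjoint `A* : Y* → Y*`, `f ↦ f ∘ A`. -/
noncomputable def dualOp {Y : Type*} [NormedAddCommGroup Y] [NormedSpace ℝ Y]
    (A : Y →L[ℝ] Y) : StrongDual ℝ Y →L[ℝ] StrongDual ℝ Y :=
  (ContinuousLinearMap.compL ℝ Y Y ℝ).flip A

/-!
Taking adjoints is an isometry mapping `P`-compact operators to `P*`-compact ones, which gives
`‖A* + K(Y*,P*)‖ ≤ ‖A + K(Y,P)‖`. Conversely, with `Q = I - Pₙ`, the operator
`A - QAQ = PₙA + APₙ - PₙAPₙ` is `P`-compact: `A` is a multiplier, and `Pₙ` and `PₙAPₙ` are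
fixed by `Pₙ₊₁` on both sides, which makes them `P`-compact. Hence for every
`P*`-compact `M`
`‖A + K(Y,P)‖ ≤ ‖QAQ‖ = ‖Q*A*Q*‖ ≤ ‖Q*(A* + M)Q*‖ + ‖Q*MQ*‖ ≤ ‖A* + M‖ + ‖M - Pₙ*M‖`,
using `‖Q‖ = 1`; the last term tends to `0`.
-/

open Filter Topology

section QuotientNorm

variable {E : Type*} [SeminormedAddCommGroup E] {p : E → Prop}

lemma sInf_norm_add_le (A : E) {L : E} (hL : p L) :
    sInf {r : ℝ | ∃ L, p L ∧ r = ‖A + L‖} ≤ ‖A + L‖ :=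
  csInf_le ⟨0, by rintro _ ⟨L, -, rfl⟩; exact norm_nonneg _⟩ ⟨L, hL, rfl⟩

lemma le_sInf_norm_add {A : E} {c : ℝ} (h0 : p 0) (h : ∀ L, p L → c ≤ ‖A + L‖) :
    c ≤ sInf {r : ℝ | ∃ L, p L ∧ r = ‖A + L‖} :=
  le_csInf ⟨_, 0, h0, rfl⟩ (by rintro _ ⟨L, hL, rfl⟩; exact h L hL)

end QuotientNorm

lemma norm_mul_mul_le_add {R : Type*} [SeminormedRing R] {Q : R} (hQ : ‖Q‖ ≤ 1) (T M : R) :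
    ‖Q * T * Q‖ ≤ ‖T + M‖ + ‖Q * M‖ := by
  have hsplit : Q * T * Q = Q * (T + M) * Q - Q * M * Q := by noncomm_ring
  calc ‖Q * T * Q‖ ≤ ‖Q * (T + M) * Q‖ + ‖Q * M * Q‖ := hsplit ▸ norm_sub_le _ _
    _ ≤ ‖Q‖ * ‖T + M‖ * ‖Q‖ + ‖Q * M‖ * ‖Q‖ := by
        gcongr
        · exact norm_mul₃_le
        · exact norm_mul_le _ _
    _ ≤ ‖T + M‖ + ‖Q * M‖ := by
        gcongr
        · calc ‖Q‖ * ‖T + M‖ * ‖Q‖ ≤ 1 * ‖T + M‖ * 1 := by gcongr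
            _ = ‖T + M‖ := by ring
        · exact mul_le_of_le_one_right (norm_nonneg _) hQ

section Adjoint

variable {Y : Type*} [NormedAddCommGroup Y] [NormedSpace ℝ Y]

lemma dualOp_mul (S T : Y →L[ℝ] Y) : dualOp (S * T) = dualOp T * dualOp S := rfl

lemma dualOp_one : dualOp (1 : Y →L[ℝ] Y) = 1 := rfl

lemma dualOp_add (S T : Y →L[ℝ] Y) : dualOp (S + T) = dualOp S + dualOp T :=
  map_add (ContinuousLinearMap.compL ℝ Y Y ℝ).flip S T

lemma dualOp_sub (S T : Y →L[ℝ] Y) : dualOp (S - T) = dualOp S - dualOp T :=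
  map_sub (ContinuousLinearMap.compL ℝ Y Y ℝ).flip S T

lemma norm_dualOp (A : Y →L[ℝ] Y) : ‖dualOp A‖ = ‖A‖ := by
  refine le_antisymm ?_ ?_
  · refine ContinuousLinearMap.opNorm_le_bound _ (norm_nonneg A) fun f => ?_
    rw [mul_comm]
    exact f.opNorm_comp_le A
  · refine ContinuousLinearMap.opNorm_le_bound _ (norm_nonneg (dualOp A)) fun x => ?_
    refine NormedSpace.norm_le_dual_bound ℝ (A x) (by positivity) fun f => ?_
    calc ‖dualOp A f x‖ ≤ ‖dualOp A f‖ * ‖x‖ := (dualOp A f).le_opNorm x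
      _ ≤ ‖dualOp A‖ * ‖f‖ * ‖x‖ := by gcongr; exact (dualOp A).le_opNorm f
      _ = ‖dualOp A‖ * ‖x‖ * ‖f‖ := by ring

end Adjoint

section PCompact

variable {Y : Type*} [NormedAddCommGroup Y] [NormedSpace ℝ Y] {P : ℕ → Y →L[ℝ] Y}

lemma isPCompact'_iff {K : Y →L[ℝ] Y} :
    IsPCompact' P K ↔ Tendsto (fun n => K - P n * K) atTop (𝓝 0) ∧
      Tendsto (fun n => K - K * P n) atTop (𝓝 0) := by
  simp only [tendsto_zero_iff_norm_tendsto_zero (E := Y →L[ℝ] Y)]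
  refine ⟨fun h => ⟨?_, ?_⟩, fun h => ?_⟩
  · exact squeeze_zero (fun _ => norm_nonneg _)
      (fun _ => le_add_of_nonneg_right (norm_nonneg _)) h
  · exact squeeze_zero (fun _ => norm_nonneg _)
      (fun _ => le_add_of_nonneg_left (norm_nonneg _)) h
  · show Tendsto (fun n => ‖K - P n * K‖ + ‖K - K * P n‖) atTop (𝓝 0)
    simpa using h.1.add h.2

variable (P) in
/-- The `P`-compact operators `K(Y,P)`. -/
def pCompacts : AddSubgroup (Y →L[ℝ] Y) where
  carrier := {K | IsPCompact' P K}
  zero_mem' := isPCompact'_iff.2 (by simp)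
  add_mem' {K L} hK hL := by
    obtain ⟨hK₁, hK₂⟩ := isPCompact'_iff.1 hK
    obtain ⟨hL₁, hL₂⟩ := isPCompact'_iff.1 hL
    refine isPCompact'_iff.2 ⟨?_, ?_⟩
    · simpa [mul_add, add_sub_add_comm] using hK₁.add hL₁
    · simpa [add_mul, add_sub_add_comm] using hK₂.add hL₂
  neg_mem' {K} hK := by
    obtain ⟨hK₁, hK₂⟩ := isPCompact'_iff.1 hK
    refine isPCompact'_iff.2 ⟨?_, ?_⟩
    · simpa [neg_add_eq_sub] using hK₁.neg
    · simpa [neg_add_eq_sub] using hK₂.neg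

lemma IsPCompact'.dualOp {K : Y →L[ℝ] Y} (h : IsPCompact' P K) :
    IsPCompact' (fun n => dualOp (P n)) (dualOp K) := by
  refine h.congr fun n => ?_
  rw [add_comm, ← norm_dualOp (K - K.comp (P n)), ← norm_dualOp (K - (P n).comp K),
    dualOp_sub, dualOp_sub]
  rfl

lemma IsPCompact'.tendsto_norm_sub_mul {K : Y →L[ℝ] Y} (h : IsPCompact' P K) :
    Tendsto (fun n => ‖K - P n * K‖) atTop (𝓝 0) :=
  tendsto_zero_iff_norm_tendsto_zero.1 (isPCompact'_iff.1 h).1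

end PCompact

section ApproximateProjection

variable {Y : Type*} [NormedAddCommGroup Y] [NormedSpace ℝ Y] {P : ℕ → Y →L[ℝ] Y}

lemma mul_eq_of_lt (hproj : ∀ n, P n * P (n + 1) = P n ∧ P (n + 1) * P n = P n)
    {n m : ℕ} (h : n < m) : P n * P m = P n ∧ P m * P n = P n := by
  induction m, h using Nat.le_induction with
  | base => exact hproj n
  | succ m _ ih =>
    constructor
    · calc P n * P (m + 1) = P n * P m * P (m + 1) := by rw [ih.1]
        _ = P n := by rw [mul_assoc, (hproj m).1, ih.1]
    · calc P (m + 1) * P n = P (m + 1) * (P m * P n) := by rw [ih.2]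
        _ = P n := by rw [← mul_assoc, (hproj m).2, ih.2]

lemma isPCompact'_of_mul_eq (hproj : ∀ n, P n * P (n + 1) = P n ∧ P (n + 1) * P n = P n)
    {m : ℕ} {K : Y →L[ℝ] Y} (hl : P m * K = K) (hr : K * P m = K) : IsPCompact' P K := by
  refine isPCompact'_iff.2 ⟨tendsto_const_nhds.congr' ?_, tendsto_const_nhds.congr' ?_⟩ <;>
    filter_upwards [eventually_gt_atTop m] with k hk
  · have hk : P k * K = K := by rw [← hl, ← mul_assoc, (mul_eq_of_lt hproj hk).2]
    rw [hk, sub_self]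
  · have hk : K * P k = K := by rw [← hr, mul_assoc, (mul_eq_of_lt hproj hk).1]
    rw [hk, sub_self]

lemma mem_pCompacts_self (hproj : ∀ n, P n * P (n + 1) = P n ∧ P (n + 1) * P n = P n)
    (n : ℕ) : P n ∈ pCompacts P :=
  isPCompact'_of_mul_eq hproj (hproj n).2 (hproj n).1

lemma mul_mul_mem_pCompacts (hproj : ∀ n, P n * P (n + 1) = P n ∧ P (n + 1) * P n = P n)
    (n : ℕ) (T : Y →L[ℝ] Y) : P n * T * P n ∈ pCompacts P :=
  isPCompact'_of_mul_eq hproj (m := n + 1) (by simp only [← mul_assoc, (hproj n).2])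
    (by rw [mul_assoc _ (P n), (hproj n).1])

lemma compl_mul_mul_compl_sub_mem_pCompacts
    (hproj : ∀ n, P n * P (n + 1) = P n ∧ P (n + 1) * P n = P n) {A : Y →L[ℝ] Y}
    (hA : ∀ K, IsPCompact' P K → IsPCompact' P (A * K) ∧ IsPCompact' P (K * A)) (n : ℕ) :
    (1 - P n) * A * (1 - P n) - A ∈ pCompacts P := by
  have hPA := hA _ (mem_pCompacts_self hproj n)
  rw [show (1 - P n) * A * (1 - P n) - A = P n * A * P n - (P n * A + A * P n) by noncomm_ring]
  exact sub_mem (mul_mul_mem_pCompacts hproj n A) (add_mem hPA.2 hPA.1)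

end ApproximateProjection

section Duality

variable {Y : Type*} [NormedAddCommGroup Y] [NormedSpace ℝ Y]

lemma norm_compl_mul_mul_compl_le {p : Y →L[ℝ] Y} (hp : ‖1 - p‖ ≤ 1) (A : Y →L[ℝ] Y)
    (M : StrongDual ℝ Y →L[ℝ] StrongDual ℝ Y) :
    ‖(1 - p) * A * (1 - p)‖ ≤ ‖dualOp A + M‖ + ‖M - dualOp p * M‖ := by
  have hq : ‖1 - dualOp p‖ ≤ 1 := by rwa [← dualOp_one, ← dualOp_sub, norm_dualOp]
  calc ‖(1 - p) * A * (1 - p)‖ = ‖(1 - dualOp p) * dualOp A * (1 - dualOp p)‖ := by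
        rw [← norm_dualOp, dualOp_mul, dualOp_mul, dualOp_sub, dualOp_one, mul_assoc]
    _ ≤ ‖dualOp A + M‖ + ‖(1 - dualOp p) * M‖ := norm_mul_mul_le_add hq (dualOp A) M
    -- explicit arguments: keyed matching misses the ring's `Sub` instance on operators on `Y*`
    _ = ‖dualOp A + M‖ + ‖M - dualOp p * M‖ := by rw [sub_mul 1 (dualOp p) M, one_mul]

lemma sInf_norm_add_le_norm_dualOp_add {P : ℕ → Y →L[ℝ] Y}
    (hproj : ∀ n, P n * P (n + 1) = P n ∧ P (n + 1) * P n = P n) (hP : ∀ n, ‖1 - P n‖ ≤ 1)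
    {A : Y →L[ℝ] Y} (hA : ∀ K, IsPCompact' P K → IsPCompact' P (A * K) ∧ IsPCompact' P (K * A))
    {M : StrongDual ℝ Y →L[ℝ] StrongDual ℝ Y} (hM : IsPCompact' (fun n => dualOp (P n)) M) :
    sInf {r : ℝ | ∃ L, IsPCompact' P L ∧ r = ‖A + L‖} ≤ ‖dualOp A + M‖ := by
  refine ge_of_tendsto' (by simpa using tendsto_const_nhds.add hM.tendsto_norm_sub_mul) fun n => ?_
  calc sInf {r : ℝ | ∃ L, IsPCompact' P L ∧ r = ‖A + L‖}
      ≤ ‖A + ((1 - P n) * A * (1 - P n) - A)‖ :=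
        sInf_norm_add_le A (compl_mul_mul_compl_sub_mem_pCompacts hproj hA n)
    _ = ‖(1 - P n) * A * (1 - P n)‖ := by rw [add_sub_cancel]
    _ ≤ ‖dualOp A + M‖ + ‖M - dualOp (P n) * M‖ := norm_compl_mul_mul_compl_le (hP n) A M

end Duality

theorem quotient_norm_eq_quotient_norm_adjoint_general
    {Y : Type*} [NormedAddCommGroup Y] [NormedSpace ℝ Y]
    (P : ℕ → Y →L[ℝ] Y) (A : Y →L[ℝ] Y)
    (hproj : ∀ n, (P n).comp (P (n + 1)) = P n ∧ (P (n + 1)).comp (P n) = P n)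
    (hnorm : ∀ n, ‖P n‖ = 1 ∧ ‖ContinuousLinearMap.id ℝ Y - P n‖ = 1)
    (hA : ∀ K : Y →L[ℝ] Y, IsPCompact' P K →
      IsPCompact' P (A.comp K) ∧ IsPCompact' P (K.comp A)) :
    sInf {r : ℝ | ∃ L, IsPCompact' P L ∧ r = ‖A + L‖} =
      sInf {r : ℝ | ∃ M, IsPCompact' (fun n => dualOp (P n)) M ∧
        r = ‖dualOp A + M‖} :=
  le_antisymm
    (le_sInf_norm_add (pCompacts _).zero_mem fun _ hM =>
      sInf_norm_add_le_norm_dualOp_add hproj (fun n => (hnorm n).2.le) hA hM)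
    (le_sInf_norm_add (pCompacts P).zero_mem fun L hL =>
      (sInf_norm_add_le (dualOp A) hL.dualOp).trans_eq (by rw [← dualOp_add, norm_dualOp]))

/-- For a uniform approximate projection `(Pₙ)` on `Y` and `A ∈ L(Y,P)`,
the quotient norm of `A` modulo the `P`-compact operators equals the quotient
norm of the adjoint `A*` modulo the `P*`-compact operators on `Y*`. -/
theorem quotient_norm_eq_quotient_norm_adjoint
    {Y : Type*} [NormedAddCommGroup Y] [NormedSpace ℝ Y] [CompleteSpace Y]
    (P : ℕ → Y →L[ℝ] Y) (A : Y →L[ℝ] Y)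
    (hproj : ∀ n, (P n).comp (P (n + 1)) = P n ∧ (P (n + 1)).comp (P n) = P n)
    (hidem : ∀ n, (P n).comp (P n) = P n)
    (hnorm : ∀ n, ‖P n‖ = 1 ∧ ‖ContinuousLinearMap.id ℝ Y - P n‖ = 1)
    (hA : ∀ K : Y →L[ℝ] Y, IsPCompact' P K →
      IsPCompact' P (A.comp K) ∧ IsPCompact' P (K.comp A)) :
    sInf {r : ℝ | ∃ L, IsPCompact' P L ∧ r = ‖A + L‖} =
      sInf {r : ℝ | ∃ M, IsPCompact' (fun n => dualOp (P n)) M ∧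
        r = ‖dualOp A + M‖} :=
  quotient_norm_eq_quotient_norm_adjoint_general P A hproj hnorm hA
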